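/- arXiv:2601.17248 — 3 statements merged into one kernel-verified Lean document; each statement's English description precedes it below -/
import Mathlib

section
/- Let η_V > 0, η_S > 0, α ∈ [0,1], μ ∈ ℝ and ρ < 0. Define for x ∈ ℝ and y ≥ 0 the joint density p^C(x,y) = η_V e^{-η_V y} · ( α η_S e^{-η_S (x - μ - ρ y)} 1_{x - μ - ρ y ≥ 0} + (1-α) η_S e^{η_S (x - μ - ρ y)} 1_{x - μ - ρ y < 0} ). Then for every x > μ, ∫₀^∞ p^C(x,y) dy = c_R · η_S e^{-η_S x}, where c_R = α · (η_V / (η_V + η_S |ρ|)) · e^{η_S μ}. -/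
open MeasureTheory

/-- The joint density of the common jumps in the Kou-type model. -/
noncomputable def pC (ηV ηS α μ ρ : ℝ) (x y : ℝ) : ℝ :=
  ηV * Real.exp (-ηV * y) *
    (if 0 ≤ x - μ - ρ * y then α * (ηS * Real.exp (-ηS * (x - μ - ρ * y)))
     else (1 - α) * (ηS * Real.exp (ηS * (x - μ - ρ * y))))

/-- Marginal density of the common asset jump in the Kou-type model on `{x > μ}`:
`∫₀^∞ p^C(x,y) dy = c_R η_S e^{-η_S x}` with
`c_R = α (η_V/(η_V + η_S|ρ|)) e^{η_S μ}`. -/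
theorem stmt_5 (ηV ηS α μ ρ : ℝ) (hηV : 0 < ηV) (hηS : 0 < ηS)
    (hα : α ∈ Set.Icc (0 : ℝ) 1) (hρ : ρ < 0) :
    ∀ x : ℝ, μ < x →
      ∫ y in Set.Ioi (0 : ℝ), pC ηV ηS α μ ρ x y
        = (α * (ηV / (ηV + ηS * |ρ|)) * Real.exp (ηS * μ)) * (ηS * Real.exp (-ηS * x)) := by
  intro x hx
  have habs : |ρ| = -ρ := abs_of_neg hρ
  set c := ηV + ηS * |ρ| with hc
  have hcpos : 0 < c := by
    have : 0 ≤ ηS * |ρ| := mul_nonneg hηS.le (abs_nonneg _)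
    rw [hc]; linarith
  have h1 : Set.EqOn (fun y => pC ηV ηS α μ ρ x y)
      (fun y => (α * ηV * ηS * Real.exp (-ηS * (x - μ))) * Real.exp (-(c * y)))
      (Set.Ioi (0 : ℝ)) := by
    intro y hy
    have hy' : (0 : ℝ) < y := hy
    have hcond : 0 ≤ x - μ - ρ * y := by nlinarith
    simp only [pC, if_pos hcond]
    rw [show ηV * Real.exp (-ηV * y) * (α * (ηS * Real.exp (-ηS * (x - μ - ρ * y))))
        = α * ηV * ηS * Real.exp (-ηV * y + -ηS * (x - μ - ρ * y)) by
      rw [Real.exp_add]; ring]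
    rw [show (α * ηV * ηS * Real.exp (-ηS * (x - μ))) * Real.exp (-(c * y))
        = α * ηV * ηS * Real.exp (-ηS * (x - μ) + -(c * y)) by
      rw [Real.exp_add]; ring]
    congr 1
    rw [hc, habs]; ring
  rw [setIntegral_congr_fun measurableSet_Ioi h1]
  rw [MeasureTheory.integral_const_mul]
  have h2 : (∫ y in Set.Ioi (0 : ℝ), Real.exp (-(c * y))) = c⁻¹ := by
    have := integral_comp_mul_left_Ioi (fun u => Real.exp (-u)) 0 hcpos
    simp only [mul_zero, integral_exp_neg_Ioi, neg_zero, Real.exp_zero, smul_eq_mul,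
      mul_one] at this
    exact this
  rw [h2]
  rw [show -ηS * (x - μ) = ηS * μ + -ηS * x by ring, Real.exp_add]
  field_simp
end

section
/- Let η_V > 0, η_S > 0, α ∈ [0,1], μ ∈ ℝ and ρ < 0 with η_V ≠ η_S |ρ|. Define for x ∈ ℝ and y ≥ 0 the joint density p^C(x,y) = η_V e^{-η_V y} · ( α η_S e^{-η_S (x - μ - ρ y)} 1_{x - μ - ρ y ≥ 0} + (1-α) η_S e^{η_S (x - μ - ρ y)} 1_{x - μ - ρ y < 0} ). Then for every x < μ, ∫₀^∞ p^C(x,y) dy = c_{1L} · (η_V/|ρ|) e^{(η_V/|ρ|) x} + c_{2L} · η_S e^{η_S x}, where c_{1L} = α (η_S |ρ| / (η_V + η_S |ρ|)) e^{-(η_V/|ρ|) μ} - (1-α) (η_S |ρ| / (η_V - η_S |ρ|)) e^{-(η_V/|ρ|) μ} and c_{2L} = (1-α) (η_V / (η_V - η_S |ρ|)) e^{-η_S μ}. -/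
open MeasureTheory

open Real Set

theorem integral_exp_mul {a b k : ℝ} (hk : k ≠ 0) :
    ∫ y in a..b, exp (k * y) = (exp (k * b) - exp (k * a)) / k := by
  rw [intervalIntegral.integral_comp_mul_left (fun y => exp y) hk, integral_exp, smul_eq_mul]
  ring

section Marginal

variable {ηV ηS α μ ρ x y : ℝ}

lemma pC_of_neg (h : x - μ - ρ * y < 0) :
    pC ηV ηS α μ ρ x y
      = (1 - α) * ηV * ηS * exp (ηS * (x - μ)) * exp (-(ηV + ηS * ρ) * y) := by
  have hexp : exp (-ηV * y) * exp (ηS * (x - μ - ρ * y))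
      = exp (ηS * (x - μ)) * exp (-(ηV + ηS * ρ) * y) := by
    rw [← exp_add, ← exp_add]; ring_nf
  rw [pC, if_neg h.not_ge]
  linear_combination (1 - α) * ηV * ηS * hexp

lemma pC_of_nonneg (h : 0 ≤ x - μ - ρ * y) :
    pC ηV ηS α μ ρ x y
      = α * ηV * ηS * exp (-(ηS * (x - μ))) * exp (-(ηV - ηS * ρ) * y) := by
  have hexp : exp (-ηV * y) * exp (-ηS * (x - μ - ρ * y))
      = exp (-(ηS * (x - μ))) * exp (-(ηV - ηS * ρ) * y) := by
    rw [← exp_add, ← exp_add]; ring_nf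
  rw [pC, if_pos h]
  linear_combination α * ηV * ηS * hexp

theorem integral_pC_Ioi_eq_split (hρ : ρ < 0) (hx : x ≤ μ) (hk : ηV + ηS * ρ ≠ 0)
    (hb : 0 < ηV - ηS * ρ) :
    ∫ y in Ioi 0, pC ηV ηS α μ ρ x y
      = (1 - α) * ηV * ηS * (exp (ηS * (x - μ))
            - exp (ηS * (x - μ)) * exp (-(ηV + ηS * ρ) * ((x - μ) / ρ))) / (ηV + ηS * ρ)
        + α * ηV * ηS * (exp (-(ηS * (x - μ))) * exp (-(ηV - ηS * ρ) * ((x - μ) / ρ)))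
            / (ηV - ηS * ρ) := by
  set y₀ := (x - μ) / ρ
  have hy₀ : 0 ≤ y₀ := div_nonneg_of_nonpos (by linarith) hρ.le
  have hρy₀ : ρ * y₀ = x - μ := mul_div_cancel₀ _ hρ.ne
  have hleft : EqOn (pC ηV ηS α μ ρ x)
      (fun y => (1 - α) * ηV * ηS * exp (ηS * (x - μ)) * exp (-(ηV + ηS * ρ) * y))
      (uIoo 0 y₀) := by
    rw [uIoo_of_le hy₀]
    exact fun y hy => pC_of_neg (by nlinarith [hy.2])
  have hright : EqOn (pC ηV ηS α μ ρ x)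
      (fun y => α * ηV * ηS * exp (-(ηS * (x - μ))) * exp (-(ηV - ηS * ρ) * y)) (Ioi y₀) :=
    fun y hy => pC_of_nonneg (by nlinarith [mem_Ioi.1 hy])
  have hint_left : IntervalIntegrable (pC ηV ηS α μ ρ x) volume 0 y₀ :=
    (Continuous.intervalIntegrable (by fun_prop) _ _).congr_uIoo hleft.symm
  have hint_right : IntegrableOn (pC ηV ηS α μ ρ x) (Ioi y₀) :=
    IntegrableOn.congr_fun ((integrableOn_exp_mul_Ioi (neg_lt_zero.2 hb) y₀).const_mul _)
      hright.symm measurableSet_Ioi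
  rw [← intervalIntegral.integral_interval_add_Ioi' hint_left hint_right,
    intervalIntegral.integral_congr_uIoo hleft, setIntegral_congr_fun measurableSet_Ioi hright,
    intervalIntegral.integral_const_mul, integral_const_mul, integral_exp_mul (neg_ne_zero.2 hk),
    integral_exp_mul_Ioi (neg_lt_zero.2 hb), mul_zero, exp_zero, neg_div_neg_eq, div_neg]
  ring

theorem integral_pC_Ioi (hρ : ρ < 0) (hx : x ≤ μ) (hk : ηV + ηS * ρ ≠ 0)
    (hb : 0 < ηV - ηS * ρ) :
    ∫ y in Ioi 0, pC ηV ηS α μ ρ x y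
      = (1 - α) * ηV * ηS * (exp (ηS * (x - μ)) - exp (ηV / ρ * (μ - x))) / (ηV + ηS * ρ)
        + α * ηV * ηS * exp (ηV / ρ * (μ - x)) / (ηV - ηS * ρ) := by
  have hcancel_left : exp (ηS * (x - μ)) * exp (-(ηV + ηS * ρ) * ((x - μ) / ρ))
      = exp (ηV / ρ * (μ - x)) := by
    rw [← exp_add]; congr 1; field_simp [hρ.ne]; ring
  have hcancel_right : exp (-(ηS * (x - μ))) * exp (-(ηV - ηS * ρ) * ((x - μ) / ρ))
      = exp (ηV / ρ * (μ - x)) := by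
    rw [← exp_add]; congr 1; field_simp [hρ.ne]; ring
  rw [integral_pC_Ioi_eq_split hρ hx hk hb, hcancel_left, hcancel_right]

end Marginal

theorem stmt_6_general (ηV ηS α μ ρ : ℝ) (hηV : 0 < ηV) (hηS : 0 < ηS)
    (hρ : ρ < 0) (hne : ηV ≠ ηS * |ρ|) :
    ∀ x : ℝ, x < μ →
      ∫ y in Set.Ioi (0 : ℝ), pC ηV ηS α μ ρ x y
        = (α * (ηS * |ρ| / (ηV + ηS * |ρ|)) * Real.exp (-(ηV / |ρ|) * μ)
            - (1 - α) * (ηS * |ρ| / (ηV - ηS * |ρ|)) * Real.exp (-(ηV / |ρ|) * μ))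
            * (ηV / |ρ| * Real.exp (ηV / |ρ| * x))
          + ((1 - α) * (ηV / (ηV - ηS * |ρ|)) * Real.exp (-ηS * μ))
            * (ηS * Real.exp (ηS * x)) := by
  intro x hx
  rw [abs_of_neg hρ] at hne ⊢
  have hk : ηV + ηS * ρ ≠ 0 := fun h => hne (by linarith)
  have hb : 0 < ηV - ηS * ρ := by nlinarith
  have hexpV : exp (ηV / ρ * (μ - x)) = exp (-(ηV / -ρ) * μ) * exp (ηV / -ρ * x) := by
    rw [← exp_add]; ring_nf
  have hexpS : exp (ηS * (x - μ)) = exp (-ηS * μ) * exp (ηS * x) := by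
    rw [← exp_add]; ring_nf
  rw [integral_pC_Ioi hρ hx.le hk hb, hexpV, hexpS, show ηV - ηS * -ρ = ηV + ηS * ρ by ring,
    show ηV + ηS * -ρ = ηV - ηS * ρ by ring]
  field_simp [hρ.ne, hb.ne']
  ring

/-- Marginal density of the common asset jump in the Kou-type model on `{x < μ}`:
`∫₀^∞ p^C(x,y) dy = c_{1L} (η_V/|ρ|) e^{(η_V/|ρ|)x} + c_{2L} η_S e^{η_S x}`. -/
theorem stmt_6 (ηV ηS α μ ρ : ℝ) (hηV : 0 < ηV) (hηS : 0 < ηS)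
    (hα : α ∈ Set.Icc (0 : ℝ) 1) (hρ : ρ < 0) (hne : ηV ≠ ηS * |ρ|) :
    ∀ x : ℝ, x < μ →
      ∫ y in Set.Ioi (0 : ℝ), pC ηV ηS α μ ρ x y
        = (α * (ηS * |ρ| / (ηV + ηS * |ρ|)) * Real.exp (-(ηV / |ρ|) * μ)
            - (1 - α) * (ηS * |ρ| / (ηV - ηS * |ρ|)) * Real.exp (-(ηV / |ρ|) * μ))
            * (ηV / |ρ| * Real.exp (ηV / |ρ| * x))
          + ((1 - α) * (ηV / (ηV - ηS * |ρ|)) * Real.exp (-ηS * μ))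
            * (ηS * Real.exp (ηS * x)) :=
  stmt_6_general ηV ηS α μ ρ hηV hηS hρ hne
end

section
/- Let Z and Z' be independent standard normal random variables, and let μ ∈ ℝ, σ_V > 0, σ_S ∈ ℝ, ρ ∈ ℝ. Set Y = μ + ρ σ_V |Z| + σ_S Z'. Then E[e^Y] = 2 e^{μ + σ_S²/2 + ρ² σ_V²/2} Φ(ρ σ_V), and E[Y] = μ + √(2/π) · ρ σ_V. -/
open MeasureTheory ProbabilityTheory

noncomputable def stdNormalCDF (x : ℝ) : ℝ :=
  ∫ y in Set.Iic x, (Real.sqrt (2 * Real.pi))⁻¹ * Real.exp (-(y ^ 2) / 2)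

/-!
With `φ` the standard normal density, completing the square gives `φ(x) e^{cx} = e^{c²/2} φ(x - c)`;
together with the evenness of `φ` this yields
`E[e^{c|Z|}] = 2 ∫_0^∞ φ(x) e^{cx} dx = 2 e^{c²/2} ∫_{-c}^∞ φ = 2 e^{c²/2} Φ(c)`,
and likewise `E|Z| = 2 ∫_0^∞ x φ(x) dx = √(2/π)`. Independence of `Z` and `Z'` factorises
`E[e^Y] = e^μ E[e^{ρσ_V|Z|}] E[e^{σ_S Z'}]`, the last factor being the Gaussian moment generating
function `e^{σ_S²/2}`, and `E[Y]` follows by linearity.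
-/

open Real Set

lemma gaussianPDFReal_zero_one (x : ℝ) :
    gaussianPDFReal 0 1 x = (√(2 * π))⁻¹ * exp (-(x ^ 2) / 2) := by
  simp [gaussianPDFReal]

lemma integral_Ioi_gaussianPDFReal_zero_one (a : ℝ) :
    ∫ x in Ioi a, gaussianPDFReal 0 1 x = stdNormalCDF (-a) := by
  simp_rw [stdNormalCDF, ← integral_comp_neg_Ioi, gaussianPDFReal_zero_one, neg_sq]

lemma setIntegral_Ioi_comp_sub_right {E : Type*} [NormedAddCommGroup E] [NormedSpace ℝ E]
    (f : ℝ → E) (a c : ℝ) : ∫ x in Ioi a, f (x - c) = ∫ x in Ioi (a - c), f x := by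
  simpa using (measurePreserving_sub_right volume c).setIntegral_preimage_emb
    (measurableEmbedding_subRight c) f (Ioi (a - c))

lemma gaussianPDFReal_zero_one_mul_exp (c x : ℝ) :
    gaussianPDFReal 0 1 x * exp (c * x) = exp (c ^ 2 / 2) * gaussianPDFReal 0 1 (x - c) := by
  simp only [gaussianPDFReal_zero_one]
  rw [mul_assoc, ← exp_add, mul_left_comm, ← exp_add]
  ring_nf

theorem integral_exp_mul_abs_gaussianReal (c : ℝ) :
    ∫ x, exp (c * |x|) ∂gaussianReal 0 1 = 2 * exp (c ^ 2 / 2) * stdNormalCDF c := by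
  have h_even (x : ℝ) : gaussianPDFReal 0 1 x • exp (c * |x|)
      = (fun t ↦ gaussianPDFReal 0 1 t * exp (c * t)) |x| := by
    simp [gaussianPDFReal_zero_one]
  rw [integral_gaussianReal_eq_integral_smul one_ne_zero,
    integral_congr_ae (ae_of_all _ h_even),
    integral_comp_abs (f := fun t ↦ gaussianPDFReal 0 1 t * exp (c * t))]
  simp_rw [gaussianPDFReal_zero_one_mul_exp, integral_const_mul, setIntegral_Ioi_comp_sub_right,
    zero_sub, integral_Ioi_gaussianPDFReal_zero_one, neg_neg]
  ring

lemma integral_Ioi_mul_exp_neg_mul_sq {b : ℝ} (hb : 0 < b) :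
    ∫ x in Ioi 0, x * exp (-b * x ^ 2) = (2 * b)⁻¹ := by
  have h := integral_mul_cexp_neg_mul_sq (b := (b : ℂ)) (by simpa using hb)
  exact_mod_cast h

theorem integral_abs_gaussianReal : ∫ x, |x| ∂gaussianReal 0 1 = √(2 / π) := by
  have h_even (x : ℝ) : gaussianPDFReal 0 1 x • |x|
      = (fun t ↦ (√(2 * π))⁻¹ * (t * exp (-(1 / 2) * t ^ 2))) |x| := by
    simp only [gaussianPDFReal_zero_one, sq_abs, smul_eq_mul]; ring_nf
  rw [integral_gaussianReal_eq_integral_smul one_ne_zero,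
    integral_congr_ae (ae_of_all _ h_even),
    integral_comp_abs (f := fun t ↦ (√(2 * π))⁻¹ * (t * exp (-(1 / 2) * t ^ 2)))]
  simp_rw [integral_const_mul, integral_Ioi_mul_exp_neg_mul_sq one_half_pos]
  rw [show (2 : ℝ) / π = 2 ^ 2 / (2 * π) by field_simp, sqrt_div' _ (by positivity),
    sqrt_sq zero_le_two]
  ring

-- The common asset jump `Y^{C,S}` is `foldedNormalJump μ^S (ρ_J σ_{C,V}) σ_{C,S} (Z, Z_{C,S})`.
def foldedNormalJump (μ a b : ℝ) (p : ℝ × ℝ) : ℝ := μ + a * |p.1| + b * p.2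

@[fun_prop]
lemma measurable_foldedNormalJump (μ a b : ℝ) : Measurable (foldedNormalJump μ a b) := by
  unfold foldedNormalJump; fun_prop

theorem integral_exp_foldedNormalJump (μ a b : ℝ) :
    ∫ p, exp (foldedNormalJump μ a b p) ∂(gaussianReal 0 1).prod (gaussianReal 0 1)
      = 2 * exp (μ + b ^ 2 / 2 + a ^ 2 / 2) * stdNormalCDF a := by
  have h_mgf : ∫ y, exp (b * y) ∂gaussianReal 0 1 = exp (b ^ 2 / 2) := by
    simpa [mgf] using congrFun (mgf_id_gaussianReal (μ := 0) (v := 1)) b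
  simp only [foldedNormalJump, exp_add]
  rw [integral_prod_mul (fun x ↦ exp μ * exp (a * |x|)) (fun y ↦ exp (b * y)),
    integral_const_mul, integral_exp_mul_abs_gaussianReal, h_mgf]
  ring

theorem integral_foldedNormalJump (μ a b : ℝ) :
    ∫ p, foldedNormalJump μ a b p ∂(gaussianReal 0 1).prod (gaussianReal 0 1)
      = μ + √(2 / π) * a := by
  have h_id : Integrable (fun x ↦ x) (gaussianReal 0 1) :=
    (memLp_id_gaussianReal 1).integrable le_rfl
  have h_abs := (h_id.abs.comp_fst (gaussianReal 0 1)).const_mul a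
  simp only [foldedNormalJump]
  rw [integral_add ((integrable_const μ).fun_add h_abs) ((h_id.comp_snd _).const_mul b),
    integral_add (integrable_const μ) h_abs, integral_const_mul, integral_const_mul,
    integral_fun_fst (f := fun x ↦ |x|), integral_fun_snd (f := fun x ↦ x),
    integral_abs_gaussianReal, integral_id_gaussianReal]
  simp [mul_comm]

theorem stmt_13_general {Ω : Type*} [MeasurableSpace Ω] (P : Measure Ω) [IsProbabilityMeasure P]
    (Z Z' : Ω → ℝ)
    (hlaw : P.map (fun ω => (Z ω, Z' ω)) = (gaussianReal 0 1).prod (gaussianReal 0 1))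
    (μ σV σS ρ : ℝ)
    (Y : Ω → ℝ) (hY : Y = fun ω => μ + ρ * σV * |Z ω| + σS * Z' ω) :
    (∫ ω, Real.exp (Y ω) ∂P
        = 2 * Real.exp (μ + σS ^ 2 / 2 + ρ ^ 2 * σV ^ 2 / 2) * stdNormalCDF (ρ * σV)) ∧
    (∫ ω, Y ω ∂P = μ + Real.sqrt (2 / Real.pi) * (ρ * σV)) := by
  have hpair : HasLaw (fun ω ↦ (Z ω, Z' ω)) ((gaussianReal 0 1).prod (gaussianReal 0 1)) P :=
    ⟨aemeasurable_of_map_neZero (by rw [hlaw]; infer_instance), hlaw⟩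
  have hF := measurable_foldedNormalJump μ (ρ * σV) σS
  subst hY
  refine ⟨(hpair.integral_comp hF.exp.aestronglyMeasurable).trans ?_,
    (hpair.integral_comp hF.aestronglyMeasurable).trans (integral_foldedNormalJump _ _ _)⟩
  rw [integral_exp_foldedNormalJump, mul_pow]

/-- In the folded normal model, for `Y = μ + ρ σ_V |Z| + σ_S Z'` with `Z, Z'` independent
standard normals, `E[e^Y] = 2 e^{μ + σ_S²/2 + ρ²σ_V²/2} Φ(ρ σ_V)` and
`E[Y] = μ + √(2/π) ρ σ_V`. -/
theorem stmt_13 {Ω : Type*} [MeasurableSpace Ω] (P : Measure Ω) [IsProbabilityMeasure P]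
    (Z Z' : Ω → ℝ)
    (hlaw : P.map (fun ω => (Z ω, Z' ω)) = (gaussianReal 0 1).prod (gaussianReal 0 1))
    (μ σV σS ρ : ℝ) (hσV : 0 < σV)
    (Y : Ω → ℝ) (hY : Y = fun ω => μ + ρ * σV * |Z ω| + σS * Z' ω) :
    (∫ ω, Real.exp (Y ω) ∂P
        = 2 * Real.exp (μ + σS ^ 2 / 2 + ρ ^ 2 * σV ^ 2 / 2) * stdNormalCDF (ρ * σV)) ∧
    (∫ ω, Y ω ∂P = μ + Real.sqrt (2 / Real.pi) * (ρ * σV)) :=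
  stmt_13_general P Z Z' hlaw μ σV σS ρ Y hY
end
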